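/- Let S = {eᵢ + eⱼ : 1 ≤ i < j ≤ 4} ∪ {eᵢ − eⱼ : 1 ≤ i < j ≤ 4} ⊆ ℤ⁴, a set of 12 pairwise non-proportional vectors (the minimal vectors of the root lattice D₄ up to sign). Then the 12 matrices {p(v) : v ∈ S} are pairwise distinct, they span the full 10-dimensional real vector space of symmetric 4×4 matrices, and they are not linearly independent over ℝ. (Hence the perfect cone of D₄ has dimension 10 with 12 generating rays and is neither simplicial nor basic.) -/

import Mathlib

/-!
Over a field with `2 ≠ 0`, the forms `p(eᵢ ± eⱼ) = Eᵢᵢ + Eⱼⱼ ± (Eᵢⱼ + Eⱼᵢ)` span the symmetric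
matrices as soon as there are three indices: half their difference is `Eᵢⱼ + Eⱼᵢ`, half their sum
is `Eᵢᵢ + Eⱼⱼ`, and `2 Eᵢᵢ = (Eᵢᵢ + Eⱼⱼ) + (Eᵢᵢ + Eₖₖ) - (Eⱼⱼ + Eₖₖ)`. Symmetric `4 × 4` matrices
are the functions on unordered pairs of indices, a space of dimension `10`, so the `12` distinct
forms cannot be linearly independent.
-/

open Matrix

/-- `p v = v vᵀ`, the rank-one symmetric matrix associated to a vector `v`. -/
def rankOneForm {d : ℕ} {R : Type*} [CommRing R] (v : Fin d → R) :
    Matrix (Fin d) (Fin d) R :=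
  vecMulVec v v

/-- The `12` minimal vectors of the root lattice `D₄` up to sign:
`eᵢ + eⱼ` and `eᵢ − eⱼ` for `1 ≤ i < j ≤ 4`, viewed in `ℝ⁴`. -/
def D4HalfRoots : Set (Fin 4 → ℝ) :=
  {x | ∃ i j : Fin 4, i < j ∧
    (x = Pi.single i 1 + Pi.single j 1 ∨ x = Pi.single i 1 - Pi.single j 1)}

/-- The subspace of symmetric `4 × 4` real matrices. -/
def symSubspace4 : Submodule ℝ (Matrix (Fin 4) (Fin 4) ℝ) where
  carrier := {A | A.IsSymm}
  zero_mem' := Matrix.isSymm_zero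
  add_mem' := fun ha hb => ha.add hb
  smul_mem' := fun c _ ha => ha.smul c

section RankOneForm

variable {R S : Type*} [CommRing R] [CommRing S] {n : ℕ}

lemma rankOneForm_isSymm (v : Fin n → R) : (rankOneForm v).IsSymm :=
  transpose_vecMulVec v v

lemma rankOneForm_neg (v : Fin n → R) : rankOneForm (-v) = rankOneForm v := by
  simp [rankOneForm, neg_vecMulVec, vecMulVec_neg]

lemma map_rankOneForm (φ : R →+* S) (v : Fin n → R) :
    (rankOneForm v).map φ = rankOneForm (φ ∘ v) := by
  ext i j
  simp [rankOneForm, vecMulVec_apply]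

lemma rankOneForm_single_add_single {i j : Fin n} (hij : i ≠ j) (c : R) :
    rankOneForm (Pi.single i 1 + Pi.single j c) =
      single i i 1 + (c * c) • single j j (1 : R) + c • (single i j 1 + single j i 1) := by
  ext a b
  simp only [rankOneForm, vecMulVec_apply, Pi.add_apply, Pi.single_apply, Matrix.add_apply,
    Matrix.smul_apply, single_apply, smul_eq_mul]
  by_cases ha : a = i <;> by_cases hb : b = i <;> by_cases ha' : a = j <;> by_cases hb' : b = j <;>
    simp_all [eq_comm]

end RankOneForm

section Span

variable {K : Type*} [Field K] {n : ℕ} {M : Submodule K (Matrix (Fin n) (Fin n) K)}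

lemma single_add_single_mem_of_rankOneForm_mem (h2 : (2 : K) ≠ 0) {i j : Fin n}
    (hij : i ≠ j)
    (hplus : rankOneForm (Pi.single i 1 + Pi.single j 1 : Fin n → K) ∈ M)
    (hminus : rankOneForm (Pi.single i 1 - Pi.single j 1 : Fin n → K) ∈ M) :
    single i j 1 + single j i 1 ∈ M ∧ single i i 1 + single j j 1 ∈ M := by
  have hp := rankOneForm_single_add_single hij (1 : K)
  have hm := rankOneForm_single_add_single hij (-1 : K)
  rw [Pi.single_neg, ← sub_eq_add_neg] at hm
  constructor
  · convert M.smul_mem (2 : K)⁻¹ (M.sub_mem hplus hminus) using 1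
    rw [hp, hm]
    match_scalars <;> field_simp <;> ring
  · convert M.smul_mem (2 : K)⁻¹ (M.add_mem hplus hminus) using 1
    rw [hp, hm]
    match_scalars <;> field_simp <;> ring

lemma single_add_single_swap_mem_of_rankOneForm_mem (h2 : (2 : K) ≠ 0) (hn : 3 ≤ n)
    (hM : ∀ i j : Fin n, i ≠ j → rankOneForm (Pi.single i 1 + Pi.single j 1 : Fin n → K) ∈ M ∧
      rankOneForm (Pi.single i 1 - Pi.single j 1 : Fin n → K) ∈ M)
    (i j : Fin n) : single i j 1 + single j i 1 ∈ M := by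
  have hpair {a b : Fin n} (hab : a ≠ b) :=
    single_add_single_mem_of_rankOneForm_mem h2 hab (hM a b hab).1 (hM a b hab).2
  obtain hij | rfl := ne_or_eq i j
  · exact (hpair hij).1
  have hcard : 1 < (Finset.univ.erase i).card := by
    rw [Finset.card_erase_of_mem (Finset.mem_univ i), Finset.card_univ, Fintype.card_fin]
    omega
  obtain ⟨j, hj, k, hk, hjk⟩ := Finset.one_lt_card.1 hcard
  convert M.sub_mem (M.add_mem (hpair (Finset.ne_of_mem_erase hj).symm).2
    (hpair (Finset.ne_of_mem_erase hk).symm).2) (hpair hjk).2 using 1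
  abel

theorem isSymm_mem_of_rankOneForm_mem (h2 : (2 : K) ≠ 0) (hn : 3 ≤ n)
    (hM : ∀ i j : Fin n, i ≠ j → rankOneForm (Pi.single i 1 + Pi.single j 1 : Fin n → K) ∈ M ∧
      rankOneForm (Pi.single i 1 - Pi.single j 1 : Fin n → K) ∈ M)
    {A : Matrix (Fin n) (Fin n) K} (hA : A.IsSymm) : A ∈ M := by
  have hA' : A = (2 : K)⁻¹ • ∑ i, ∑ j, A i j • (single i j 1 + single j i 1) := by
    ext a b
    simp only [smul_add, smul_single, smul_eq_mul, mul_one, Finset.sum_add_distrib,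
      Matrix.smul_apply, Matrix.add_apply, Matrix.sum_apply, single_apply, ite_and,
      Finset.sum_ite_irrel, Finset.sum_ite_eq', Finset.mem_univ, ↓reduceIte,
      Finset.sum_const_zero, hA.apply a b]
    field_simp
    ring
  rw [hA']
  exact M.smul_mem _ <| M.sum_mem fun i _ => M.sum_mem fun j _ =>
    M.smul_mem _ (single_add_single_swap_mem_of_rankOneForm_mem h2 hn hM i j)

end Span

section Dimension

variable (R ι : Type*) [CommSemiring R]

def symmetricOfSym2 : (Sym2 ι → R) →ₗ[R] Matrix ι ι R where
  toFun f := of fun i j => f s(i, j)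
  map_add' _ _ := rfl
  map_smul' _ _ := rfl

variable {R ι}

lemma symmetricOfSym2_injective : Function.Injective (symmetricOfSym2 R ι) := by
  intro f g h
  funext s
  induction s using Sym2.ind with
  | h i j => exact congrFun (congrFun h i) j

lemma range_symmetricOfSym2 :
    (LinearMap.range (symmetricOfSym2 R ι) : Set (Matrix ι ι R)) = {A | A.IsSymm} := by
  ext A
  constructor
  · rintro ⟨f, rfl⟩
    ext i j
    exact congrArg f Sym2.eq_swap
  · intro hA
    exact ⟨Sym2.lift ⟨fun i j => A i j, fun i j => (hA.apply i j).symm⟩, by ext i j; rfl⟩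

lemma finrank_symSubspace4 : Module.finrank ℝ symSubspace4 = 10 := by
  have h : LinearMap.range (symmetricOfSym2 ℝ (Fin 4)) = symSubspace4 :=
    SetLike.coe_injective range_symmetricOfSym2
  rw [← h, LinearMap.finrank_range_of_inj symmetricOfSym2_injective,
    Module.finrank_fintype_fun_eq_card, Sym2.card, Fintype.card_fin]
  rfl

end Dimension

section HalfRoots

def halfRoot (R : Type*) [Ring R] {n : ℕ} :
    {p : Fin n × Fin n // p.1 < p.2} × Bool → Fin n → R
  | (p, true) => Pi.single p.1.1 1 + Pi.single p.1.2 1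
  | (p, false) => Pi.single p.1.1 1 - Pi.single p.1.2 1

lemma D4HalfRoots_eq_range_halfRoot : D4HalfRoots = Set.range (halfRoot ℝ) := by
  ext x
  constructor
  · rintro ⟨i, j, hij, rfl | rfl⟩
    exacts [⟨(⟨(i, j), hij⟩, true), rfl⟩, ⟨(⟨(i, j), hij⟩, false), rfl⟩]
  · rintro ⟨⟨⟨⟨i, j⟩, hij⟩, _ | _⟩, rfl⟩
    exacts [⟨i, j, hij, Or.inr rfl⟩, ⟨i, j, hij, Or.inl rfl⟩]

lemma comp_halfRoot {R S : Type*} [Ring R] [Ring S] (φ : R →+* S) {n : ℕ}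
    (t : {p : Fin n × Fin n // p.1 < p.2} × Bool) : φ ∘ halfRoot R t = halfRoot S t := by
  obtain ⟨⟨⟨i, j⟩, hij⟩, _ | _⟩ := t <;>
  · funext k
    simp only [halfRoot, Function.comp_apply, Pi.add_apply, Pi.sub_apply, Pi.single_apply]
    split_ifs <;> simp

lemma injective_rankOneForm_comp_halfRoot_int :
    Function.Injective (rankOneForm ∘ halfRoot ℤ (n := 4)) := by
  decide

-- Over `ℤ` the twelve forms are computable, so their distinctness is decided there.
lemma ncard_rankOneForm_image_D4HalfRoots : (rankOneForm '' D4HalfRoots).ncard = 12 := by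
  have hinj : Function.Injective (rankOneForm ∘ halfRoot ℝ (n := 4)) := by
    intro s t hst
    apply injective_rankOneForm_comp_halfRoot_int
    apply Matrix.map_injective (f := Int.castRingHom ℝ) Int.cast_injective
    simpa only [Function.comp_apply, map_rankOneForm, comp_halfRoot] using hst
  rw [D4HalfRoots_eq_range_halfRoot, ← Set.range_comp, Set.ncard_range_of_injective hinj,
    Nat.card_eq_fintype_card]
  rfl

end HalfRoots

lemma not_linearIndepOn_id_of_finrank_span_lt_ncard {K V : Type*} [DivisionRing K]
    [AddCommGroup V] [Module K V] {s : Set V} (h : Module.finrank K (Submodule.span K s) < s.ncard) :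
    ¬ LinearIndepOn K id s := by
  intro hs
  have : Fintype s := (Set.finite_of_ncard_pos (by omega)).fintype
  rw [finrank_span_set_eq_card hs, ← Set.ncard_eq_toFinset_card'] at h
  exact lt_irrefl _ h

lemma span_rankOneForm_image_D4HalfRoots :
    Submodule.span ℝ (rankOneForm '' D4HalfRoots) = symSubspace4 := by
  refine le_antisymm (Submodule.span_le.2 ?_) fun A hA => ?_
  · rintro _ ⟨v, -, rfl⟩
    exact rankOneForm_isSymm v
  refine isSymm_mem_of_rankOneForm_mem two_ne_zero (by norm_num) (fun i j hij => ?_)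
    (show A.IsSymm from hA)
  have mem {v : Fin 4 → ℝ} (hv : v ∈ D4HalfRoots) :
      rankOneForm v ∈ Submodule.span ℝ (rankOneForm '' D4HalfRoots) :=
    Submodule.subset_span ⟨v, hv, rfl⟩
  obtain hij | hji := hij.lt_or_gt
  · exact ⟨mem ⟨i, j, hij, Or.inl rfl⟩, mem ⟨i, j, hij, Or.inr rfl⟩⟩
  · rw [add_comm, ← rankOneForm_neg (_ - _), neg_sub]
    exact ⟨mem ⟨j, i, hji, Or.inl rfl⟩, mem ⟨j, i, hji, Or.inr rfl⟩⟩

/-- The rank-one forms `p(v)` of the `12` (pairwise non-proportional) minimal vectors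
of `D₄` are pairwise distinct, they span the full `10`-dimensional space of symmetric
`4 × 4` real matrices, and they are not linearly independent over `ℝ`: the perfect
cone of `D₄` has dimension `10` with `12` generating rays, and is neither simplicial
nor basic. -/
theorem D4_perfect_cone_not_simplicial :
    Set.ncard (rankOneForm '' D4HalfRoots) = 12 ∧
    Submodule.span ℝ (rankOneForm '' D4HalfRoots) = symSubspace4 ∧
    Module.finrank ℝ symSubspace4 = 10 ∧
    ¬ LinearIndependent ℝ
        (fun A : (rankOneForm '' D4HalfRoots) => (A : Matrix (Fin 4) (Fin 4) ℝ)) := by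
  refine ⟨ncard_rankOneForm_image_D4HalfRoots, span_rankOneForm_image_D4HalfRoots,
    finrank_symSubspace4, not_linearIndepOn_id_of_finrank_span_lt_ncard ?_⟩
  rw [span_rankOneForm_image_D4HalfRoots, finrank_symSubspace4, ncard_rankOneForm_image_D4HalfRoots]
  norm_num
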